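/- In D_1, set ^LỸ := I + XD and ^RY := I + DX (matrices over D_1). Then the following identities hold: (i) R^{−1} (^LỸ)_1 R_{21}^{−1} (^LỸ)_2 = (^LỸ)_2 R^{−1} (^LỸ)_1 R_{21}^{−1}; (ii) R_{21} (^RY)_1 R (^RY)_2 = (^RY)_2 R_{21} (^RY)_1 R; (iii) (^LỸ)_1 R_{21}^{−1} X_2 = R X_2 R_{21} (^LỸ)_1 R_{21}^{−1}; (iv) (^LỸ)_1 R_{21}^{−1} D_2 = R_{21}^{−1} D_2 R^{−1} (^LỸ)_1 R_{21}^{−1}; (v) (^RY)_1 R X_2 = R X_2 R_{21} (^RY)_1 R; (vi) (^RY)_1 R D_2 = R_{21}^{−1} D_2 R^{−1} (^RY)_1 R. -/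

import Mathlib

noncomputable section
open scoped BigOperators

namespace Rmatrix

/-- The base field `ℂ(q)`. -/
abbrev K : Type := RatFunc ℂ

/-- The parameter `q`. -/
def qq : K := RatFunc.X

/-- Row/column index type for `M_n ⊗ M_n`. -/
abbrev Idx (n : ℕ) := Fin n × Fin n

/-- The `R`-matrix
`R = q Σᵢ Eᵢᵢ⊗Eᵢᵢ + Σ_{i≠j} Eᵢᵢ⊗Eⱼⱼ + (q−q⁻¹) Σ_{i>j} Eⱼᵢ⊗Eᵢⱼ`. -/
def Rm (n : ℕ) : Matrix (Idx n) (Idx n) K := fun p r =>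
  (if p.1 = r.1 ∧ p.2 = r.2 ∧ p.1 = p.2 then qq else 0) +
  (if p.1 = r.1 ∧ p.2 = r.2 ∧ p.1 ≠ p.2 then 1 else 0) +
  (if p.1 = r.2 ∧ p.2 = r.1 ∧ p.1 < p.2 then qq - qq⁻¹ else 0)

/-- `R₂₁`, the `R`-matrix with the two tensor factors swapped. -/
def Rm21 (n : ℕ) : Matrix (Idx n) (Idx n) K := fun p r => Rm n (p.2, p.1) (r.2, r.1)

variable (n : ℕ) (A : Type) [Ring A] [Algebra K A]

/-- A scalar matrix viewed as a matrix with entries in the `K`-algebra `A`. -/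
def ext (M : Matrix (Idx n) (Idx n) K) : Matrix (Idx n) (Idx n) A :=
  M.map (algebraMap K A)

/-- `M₁ = Σ E_ij ⊗ I ⊗ m_ij`, the matrix `M` placed in the first tensor factor. -/
def m1 (M : Matrix (Fin n) (Fin n) A) : Matrix (Idx n) (Idx n) A :=
  fun p r => if p.2 = r.2 then M p.1 r.1 else 0

/-- `M₂ = Σ I ⊗ E_ij ⊗ m_ij`, the matrix `M` placed in the second tensor factor. -/
def m2 (M : Matrix (Fin n) (Fin n) A) : Matrix (Idx n) (Idx n) A :=
  fun p r => if p.1 = r.1 then M p.2 r.2 else 0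

/-- `Ω = Σ_{ij} E_ij ⊗ E_ji ⊗ 1`. -/
def Om : Matrix (Idx n) (Idx n) A := fun p r => if p.1 = r.2 ∧ p.2 = r.1 then 1 else 0

end Rmatrix

namespace Statement12

open Rmatrix

variable (n : ℕ)

/-- Generators `x_ij`, `∂_ij` of the algebra `D_1`. -/
inductive Gen (n : ℕ) : Type
  | x : Fin n → Fin n → Gen n
  | d : Fin n → Fin n → Gen n

abbrev FA (n : ℕ) := FreeAlgebra K (Gen n)

/-- The matrix `X` of generators, over the free algebra. -/
def xF (n : ℕ) : Matrix (Fin n) (Fin n) (FA n) := fun i j => FreeAlgebra.ι K (Gen.x i j)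
/-- The matrix `D` of generators, over the free algebra. -/
def dF (n : ℕ) : Matrix (Fin n) (Fin n) (FA n) := fun i j => FreeAlgebra.ι K (Gen.d i j)

/-- The defining relations of the algebra `D_1` of quantum differential operators:
`R₂₁X₁RX₂ = X₂R₂₁X₁R`, `R⁻¹D₁R₂₁⁻¹D₂ = D₂R⁻¹D₁R₂₁⁻¹`, and
`D₁R₂₁⁻¹X₂R₂₁ = RX₂R₂₁D₁ + (q−q⁻¹)RΩ`. -/
inductive Rel (n : ℕ) : FA n → FA n → Prop
  | rXX (p r : Idx n) :
      Rel n ((ext n (FA n) (Rm21 n) * m1 n (FA n) (xF n) * ext n (FA n) (Rm n) *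
                m2 n (FA n) (xF n)) p r)
            ((m2 n (FA n) (xF n) * ext n (FA n) (Rm21 n) * m1 n (FA n) (xF n) *
                ext n (FA n) (Rm n)) p r)
  | rDD (p r : Idx n) :
      Rel n ((ext n (FA n) (Rm n)⁻¹ * m1 n (FA n) (dF n) * ext n (FA n) (Rm21 n)⁻¹ *
                m2 n (FA n) (dF n)) p r)
            ((m2 n (FA n) (dF n) * ext n (FA n) (Rm n)⁻¹ * m1 n (FA n) (dF n) *
                ext n (FA n) (Rm21 n)⁻¹) p r)
  | rDX (p r : Idx n) :
      Rel n ((m1 n (FA n) (dF n) * ext n (FA n) (Rm21 n)⁻¹ * m2 n (FA n) (xF n) *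
                ext n (FA n) (Rm21 n)) p r)
            ((ext n (FA n) (Rm n) * m2 n (FA n) (xF n) * ext n (FA n) (Rm21 n) *
                m1 n (FA n) (dF n) +
              (qq - qq⁻¹) • (ext n (FA n) (Rm n) * Om n (FA n))) p r)

/-- The algebra `D_1` of quantum differential operators. -/
abbrev D1 (n : ℕ) := RingQuot (Rel n)

/-- The matrix `X` over `D_1`. -/
def XM (n : ℕ) : Matrix (Fin n) (Fin n) (D1 n) :=
  fun i j => RingQuot.mkAlgHom K (Rel n) (xF n i j)

/-- The matrix `D` over `D_1`. -/
def DM (n : ℕ) : Matrix (Fin n) (Fin n) (D1 n) :=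
  fun i j => RingQuot.mkAlgHom K (Rel n) (dF n i j)

/-- `^LỸ := I + XD`. -/
def LY (n : ℕ) : Matrix (Fin n) (Fin n) (D1 n) := 1 + XM n * DM n

/-- `^RY := I + DX`. -/
def RY (n : ℕ) : Matrix (Fin n) (Fin n) (D1 n) := 1 + DM n * XM n

end Statement12

/-!
All six identities are formal consequences of three properties of `R`: it is invertible, it
satisfies the Hecke relation `R - R₂₁⁻¹ = (q - q⁻¹) Ω = R₂₁ - R⁻¹`, and `Ω M = M^σ Ω`, where `σ`
exchanges the two tensor factors (so that `R^σ = R₂₁`, `X₁^σ = X₂`, ...). Applying `σ` to the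
defining relations of `D_1` gives their mirror images. Expanding `^LỸ = I + XD` and `^RY = I + DX`,
the identities (iii)–(vi) follow by moving `D` past `X` with the mixed relation, the Hecke relation
absorbing its inhomogeneous term. Expanding `L₂` and `Y₂` in the same way, (i) follows from (iii)
and (iv), and (ii) from (v) and (vi).
-/

namespace Rmatrix

open Matrix

variable {n : ℕ}

section Ring

variable {A : Type} [Ring A]

lemma m1_eq_blockDiagonal (M : Matrix (Fin n) (Fin n) A) :
    m1 n A M = blockDiagonal fun _ => M := by
  ext p r
  simp [m1, blockDiagonal_apply]

lemma m1_one_add_mul (M N : Matrix (Fin n) (Fin n) A) :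
    m1 n A (1 + M * N) = 1 + m1 n A M * m1 n A N := by
  rw [m1_eq_blockDiagonal, m1_eq_blockDiagonal, m1_eq_blockDiagonal, ← blockDiagonal_mul,
    ← blockDiagonal_one, ← blockDiagonal_add]
  rfl

end Ring

variable {A : Type} [Ring A] [Algebra K A]

def tensorSwap : Matrix (Idx n) (Idx n) A ≃ₐ[K] Matrix (Idx n) (Idx n) A :=
  reindexAlgEquiv K A (Equiv.prodComm (Fin n) (Fin n))

lemma tensorSwap_apply (M : Matrix (Idx n) (Idx n) A) (p r : Idx n) :
    tensorSwap M p r = M p.swap r.swap := rfl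

lemma tensorSwap_Om : tensorSwap (Om n A) = Om n A := by
  ext p r
  simp only [tensorSwap_apply, Om, Prod.fst_swap, Prod.snd_swap, and_comm]

lemma tensorSwap_m1 (M : Matrix (Fin n) (Fin n) A) : tensorSwap (m1 n A M) = m2 n A M := rfl

lemma tensorSwap_m2 (M : Matrix (Fin n) (Fin n) A) : tensorSwap (m2 n A M) = m1 n A M := rfl

lemma m2_one_add_mul (M N : Matrix (Fin n) (Fin n) A) :
    m2 n A (1 + M * N) = 1 + m2 n A M * m2 n A N := by
  rw [← tensorSwap_m1, m1_one_add_mul, map_add, map_one, map_mul, tensorSwap_m1, tensorSwap_m1]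

lemma Om_mul (M : Matrix (Idx n) (Idx n) A) : Om n A * M = tensorSwap M * Om n A := by
  ext p r
  simp [Om, mul_apply, tensorSwap_apply, ite_and, Fintype.sum_prod_type, Prod.swap]

lemma tensorSwap_Rm : tensorSwap (Rm n) = Rm21 n := rfl

lemma tensorSwap_Rm21 : tensorSwap (Rm21 n) = Rm n := rfl

lemma tensorSwap_inv (M : Matrix (Idx n) (Idx n) K) : tensorSwap M⁻¹ = (tensorSwap M)⁻¹ :=
  (inv_reindex _ _ M).symm

def rDiag (p : Idx n) : K := if p.1 = p.2 then qq else 1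

lemma rDiag_ne_zero (p : Idx n) : rDiag p ≠ 0 := by
  unfold rDiag
  split_ifs
  exacts [RatFunc.X_ne_zero, one_ne_zero]

def rNil : Matrix (Idx n) (Idx n) K := fun p r => if p.1 = r.2 ∧ p.2 = r.1 ∧ p.1 < p.2 then 1 else 0

lemma Rm_eq_diagonal_add : Rm n = diagonal rDiag + (qq - qq⁻¹) • rNil := by
  ext p r
  simp only [Rm, rDiag, rNil, diagonal_apply, Matrix.add_apply, Matrix.smul_apply, Prod.ext_iff,
    smul_eq_mul, mul_ite, mul_one, mul_zero]
  split_ifs <;> first | ring1 | (exfalso; simp only [Fin.lt_def, Fin.ext_iff] at *; omega)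

lemma diagonal_mul_rNil {d : Idx n → K} (hd : ∀ p : Idx n, p.1 ≠ p.2 → d p = 1) :
    diagonal d * rNil = rNil := by
  ext p r
  rw [diagonal_mul, rNil]
  split_ifs with h
  · rw [hd p h.2.2.ne, one_mul]
  · rw [mul_zero]

lemma rNil_mul_diagonal {d : Idx n → K} (hd : ∀ p : Idx n, p.1 ≠ p.2 → d p = 1) :
    rNil * diagonal d = rNil := by
  ext p r
  rw [mul_diagonal, rNil]
  split_ifs with h
  · rw [hd r (by rw [← h.1, ← h.2.1]; exact h.2.2.ne'), mul_one]
  · rw [zero_mul]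

lemma rNil_mul_self : rNil * rNil = (0 : Matrix (Idx n) (Idx n) K) := by
  ext p r
  refine Finset.sum_eq_zero fun s _ => ?_
  simp only [rNil]
  split_ifs <;> first | ring1 | (exfalso; simp only [Fin.lt_def, Fin.ext_iff] at *; omega)

lemma Rm_mul_diagonal_sub_eq_one : Rm n * (diagonal rDiag⁻¹ - (qq - qq⁻¹) • rNil) = 1 := by
  have hd : ∀ p : Idx n, p.1 ≠ p.2 → rDiag p = 1 := fun p h => if_neg h
  have hd' : ∀ p : Idx n, p.1 ≠ p.2 → rDiag⁻¹ p = 1 := fun p h => by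
    rw [Pi.inv_apply, hd p h, inv_one]
  have hdiag : diagonal rDiag * diagonal rDiag⁻¹ = (1 : Matrix (Idx n) (Idx n) K) := by
    rw [diagonal_mul_diagonal, ← diagonal_one]
    exact congrArg diagonal (funext fun p => mul_inv_cancel₀ (rDiag_ne_zero p))
  rw [Rm_eq_diagonal_add, add_mul, mul_sub, mul_sub, hdiag, mul_smul_comm, diagonal_mul_rNil hd,
    smul_mul_assoc, rNil_mul_diagonal hd', smul_mul_assoc, mul_smul_comm, rNil_mul_self]
  simp

lemma isUnit_det_Rm : IsUnit (Rm n).det := isUnit_det_of_right_inverse Rm_mul_diagonal_sub_eq_one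

lemma isUnit_det_Rm21 : IsUnit (Rm21 n).det := by
  rw [← tensorSwap_Rm, tensorSwap, coe_reindexAlgEquiv, det_reindex_self]
  exact isUnit_det_Rm

lemma inv_Rm21_eq_Rm_sub : (Rm21 n)⁻¹ = Rm n - (qq - qq⁻¹) • Om n K := by
  rw [← tensorSwap_Rm, ← tensorSwap_inv, inv_eq_right_inv Rm_mul_diagonal_sub_eq_one]
  ext p r
  simp only [tensorSwap_apply, Rm, rDiag, rNil, Om, diagonal_apply, Matrix.sub_apply,
    Matrix.smul_apply, Pi.inv_apply, Prod.fst_swap, Prod.snd_swap, Prod.ext_iff, smul_eq_mul,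
    mul_ite, mul_one, mul_zero]
  split_ifs <;> first | ring1 | (exfalso; simp only [Fin.lt_def, Fin.ext_iff] at *; omega)

lemma inv_Rm_eq_Rm21_sub : (Rm n)⁻¹ = Rm21 n - (qq - qq⁻¹) • Om n K := by
  rw [← tensorSwap_Rm21, ← tensorSwap_inv, inv_Rm21_eq_Rm_sub, map_sub, map_smul, tensorSwap_Rm,
    tensorSwap_Om]

lemma ext_eq_mapMatrix (M : Matrix (Idx n) (Idx n) K) :
    ext n A M = (Algebra.ofId K A).mapMatrix M := rfl

lemma tensorSwap_ext (M : Matrix (Idx n) (Idx n) K) :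
    tensorSwap (ext n A M) = ext n A (tensorSwap M) := rfl

lemma ext_mul_ext_inv {M : Matrix (Idx n) (Idx n) K} (hM : IsUnit M.det) :
    ext n A M * ext n A M⁻¹ = 1 := by
  rw [ext_eq_mapMatrix, ext_eq_mapMatrix, ← map_mul, mul_nonsing_inv M hM, map_one]

lemma ext_inv_mul_ext {M : Matrix (Idx n) (Idx n) K} (hM : IsUnit M.det) :
    ext n A M⁻¹ * ext n A M = 1 := by
  rw [ext_eq_mapMatrix, ext_eq_mapMatrix, ← map_mul, nonsing_inv_mul M hM, map_one]

lemma ext_Om : ext n A (Om n K) = Om n A := by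
  ext p r
  simp only [ext, Om, map_apply, apply_ite (algebraMap K A), map_one, map_zero]

variable (n A) in
def hecke : Matrix (Idx n) (Idx n) A := (qq - qq⁻¹) • Om n A

local notation "𝐑" => ext n A (Rm n)
local notation "𝐑⁻¹" => ext n A (Rm n)⁻¹
local notation "𝐒" => ext n A (Rm21 n)
local notation "𝐒⁻¹" => ext n A (Rm21 n)⁻¹
local notation "𝐇" => hecke n A

lemma hecke_mul (M : Matrix (Idx n) (Idx n) A) : 𝐇 * M = tensorSwap M * 𝐇 := by
  rw [hecke, smul_mul_assoc, Om_mul, mul_smul_comm]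

lemma tensorSwap_hecke : tensorSwap 𝐇 = 𝐇 := by
  rw [hecke, map_smul, tensorSwap_Om]

lemma hecke_mul_m1 (M : Matrix (Fin n) (Fin n) A) : 𝐇 * m1 n A M = m2 n A M * 𝐇 := by
  rw [hecke_mul, tensorSwap_m1]

lemma hecke_mul_m2 (M : Matrix (Fin n) (Fin n) A) : 𝐇 * m2 n A M = m1 n A M * 𝐇 := by
  rw [hecke_mul, tensorSwap_m2]

section Constants

variable (n A)

lemma ext_Rm_mul_ext_inv : 𝐑 * 𝐑⁻¹ = 1 := ext_mul_ext_inv isUnit_det_Rm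
lemma ext_inv_mul_ext_Rm : 𝐑⁻¹ * 𝐑 = 1 := ext_inv_mul_ext isUnit_det_Rm
lemma ext_Rm21_mul_ext_inv : 𝐒 * 𝐒⁻¹ = 1 := ext_mul_ext_inv isUnit_det_Rm21
lemma ext_inv_mul_ext_Rm21 : 𝐒⁻¹ * 𝐒 = 1 := ext_inv_mul_ext isUnit_det_Rm21

lemma ext_inv_Rm21_add_hecke : 𝐒⁻¹ + 𝐇 = 𝐑 := by
  rw [inv_Rm21_eq_Rm_sub, ext_eq_mapMatrix, map_sub, map_smul, ← ext_eq_mapMatrix,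
    ← ext_eq_mapMatrix, ext_Om, hecke, sub_add_cancel]

lemma ext_inv_Rm_add_hecke : 𝐑⁻¹ + 𝐇 = 𝐒 := by
  rw [inv_Rm_eq_Rm21_sub, ext_eq_mapMatrix, map_sub, map_smul, ← ext_eq_mapMatrix,
    ← ext_eq_mapMatrix, ext_Om, hecke, sub_add_cancel]

lemma hecke_mul_ext_inv_Rm : 𝐇 * 𝐑⁻¹ = 𝐒⁻¹ * 𝐇 := by
  rw [hecke_mul, tensorSwap_ext, tensorSwap_inv, tensorSwap_Rm]

lemma hecke_mul_ext_inv_Rm21 : 𝐇 * 𝐒⁻¹ = 𝐑⁻¹ * 𝐇 := by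
  rw [hecke_mul, tensorSwap_ext, tensorSwap_inv, tensorSwap_Rm21]

end Constants

variable (X D : Matrix (Fin n) (Fin n) A)

local notation "𝐗₁" => m1 n A X
local notation "𝐗₂" => m2 n A X
local notation "𝐃₁" => m1 n A D
local notation "𝐃₂" => m2 n A D

structure D1Relations : Prop where
  xx : 𝐒 * 𝐗₁ * 𝐑 * 𝐗₂ = 𝐗₂ * 𝐒 * 𝐗₁ * 𝐑
  dd : 𝐑⁻¹ * 𝐃₁ * 𝐒⁻¹ * 𝐃₂ = 𝐃₂ * 𝐑⁻¹ * 𝐃₁ * 𝐒⁻¹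
  dx : 𝐃₁ * 𝐒⁻¹ * 𝐗₂ * 𝐒 = 𝐑 * 𝐗₂ * 𝐒 * 𝐃₁ + 𝐑 * 𝐇

namespace D1Relations

variable {X D}

lemma xx_swap (h : D1Relations X D) : 𝐑 * 𝐗₂ * 𝐒 * 𝐗₁ = 𝐗₁ * 𝐑 * 𝐗₂ * 𝐒 := by
  simpa only [map_mul, tensorSwap_m1, tensorSwap_m2, tensorSwap_ext, tensorSwap_Rm,
    tensorSwap_Rm21] using congrArg tensorSwap h.xx

lemma dd_swap (h : D1Relations X D) : 𝐒⁻¹ * 𝐃₂ * 𝐑⁻¹ * 𝐃₁ = 𝐃₁ * 𝐒⁻¹ * 𝐃₂ * 𝐑⁻¹ := by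
  simpa only [map_mul, tensorSwap_m1, tensorSwap_m2, tensorSwap_ext, tensorSwap_inv,
    tensorSwap_Rm, tensorSwap_Rm21] using congrArg tensorSwap h.dd

lemma dx_mul_inv (h : D1Relations X D) : 𝐃₁ * 𝐒⁻¹ * 𝐗₂ = 𝐑 * 𝐗₂ * 𝐒 * 𝐃₁ * 𝐒⁻¹ + 𝐇 := by
  linear_combination (norm := noncomm_ring) h.dx * 𝐒⁻¹ - 𝐃₁ * 𝐒⁻¹ * 𝐗₂ * ext_Rm21_mul_ext_inv n A
    + 𝐑 * hecke_mul_ext_inv_Rm21 n A + ext_Rm_mul_ext_inv n A * 𝐇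

lemma dx_swap_mul_inv (h : D1Relations X D) :
    𝐃₂ * 𝐑⁻¹ * 𝐗₁ = 𝐒 * 𝐗₁ * 𝐑 * 𝐃₂ * 𝐑⁻¹ + 𝐇 := by
  simpa only [map_mul, map_add, tensorSwap_m1, tensorSwap_m2, tensorSwap_ext,
    tensorSwap_inv, tensorSwap_Rm, tensorSwap_Rm21, tensorSwap_hecke]
    using congrArg tensorSwap h.dx_mul_inv

lemma exchange_LY_X (h : D1Relations X D) :
    m1 n A (1 + X * D) * 𝐒⁻¹ * 𝐗₂ = 𝐑 * 𝐗₂ * 𝐒 * m1 n A (1 + X * D) * 𝐒⁻¹ := by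
  rw [m1_one_add_mul]
  calc (1 + 𝐗₁ * 𝐃₁) * 𝐒⁻¹ * 𝐗₂
    _ = (𝐒⁻¹ + 𝐇) * 𝐗₂ + 𝐑 * 𝐗₂ * 𝐒 * 𝐗₁ * 𝐃₁ * 𝐒⁻¹ := by
      linear_combination (norm := noncomm_ring) 𝐗₁ * h.dx_mul_inv - hecke_mul_m2 X
        - h.xx_swap * 𝐃₁ * 𝐒⁻¹
    _ = 𝐑 * 𝐗₂ * 𝐒 * (1 + 𝐗₁ * 𝐃₁) * 𝐒⁻¹ := by
      rw [ext_inv_Rm21_add_hecke n A]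
      linear_combination (norm := noncomm_ring) - 𝐑 * 𝐗₂ * ext_Rm21_mul_ext_inv n A

lemma exchange_LY_D (h : D1Relations X D) :
    m1 n A (1 + X * D) * 𝐒⁻¹ * 𝐃₂ = 𝐒⁻¹ * 𝐃₂ * 𝐑⁻¹ * m1 n A (1 + X * D) * 𝐒⁻¹ := by
  rw [m1_one_add_mul]
  calc (1 + 𝐗₁ * 𝐃₁) * 𝐒⁻¹ * 𝐃₂
    _ = 𝐒⁻¹ * 𝐃₂ * (𝐑⁻¹ + 𝐇) * 𝐒⁻¹ + 𝐗₁ * 𝐑 * 𝐃₂ * 𝐑⁻¹ * 𝐃₁ * 𝐒⁻¹ := by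
      linear_combination (norm := noncomm_ring) 𝐗₁ * 𝐑 * h.dd
        - 𝐗₁ * ext_Rm_mul_ext_inv n A * 𝐃₁ * 𝐒⁻¹ * 𝐃₂ - 𝐒⁻¹ * 𝐃₂ * ext_Rm21_mul_ext_inv n A
        - 𝐒⁻¹ * 𝐃₂ * ext_inv_Rm_add_hecke n A * 𝐒⁻¹
    _ = 𝐒⁻¹ * 𝐃₂ * 𝐑⁻¹ * (1 + 𝐗₁ * 𝐃₁) * 𝐒⁻¹ := by
      linear_combination (norm := noncomm_ring) - 𝐒⁻¹ * h.dx_swap_mul_inv * 𝐃₁ * 𝐒⁻¹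
        - ext_inv_mul_ext_Rm21 n A * 𝐗₁ * 𝐑 * 𝐃₂ * 𝐑⁻¹ * 𝐃₁ * 𝐒⁻¹ - 𝐒⁻¹ * hecke_mul_m1 D * 𝐒⁻¹

lemma exchange_RY_X (h : D1Relations X D) :
    m1 n A (1 + D * X) * 𝐑 * 𝐗₂ = 𝐑 * 𝐗₂ * 𝐒 * m1 n A (1 + D * X) * 𝐑 := by
  rw [m1_one_add_mul]
  calc (1 + 𝐃₁ * 𝐗₁) * 𝐑 * 𝐗₂
    _ = 𝐑 * 𝐗₂ * (𝐑⁻¹ + 𝐇) * 𝐑 + 𝐑 * 𝐗₂ * 𝐒 * 𝐃₁ * 𝐗₁ * 𝐑 := by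
      linear_combination (norm := noncomm_ring) 𝐃₁ * 𝐒⁻¹ * h.xx
        - 𝐃₁ * ext_inv_mul_ext_Rm21 n A * 𝐗₁ * 𝐑 * 𝐗₂ + h.dx * 𝐗₁ * 𝐑 + 𝐑 * hecke_mul_m1 X * 𝐑
        - 𝐑 * 𝐗₂ * ext_inv_mul_ext_Rm n A
    _ = 𝐑 * 𝐗₂ * 𝐒 * (1 + 𝐃₁ * 𝐗₁) * 𝐑 := by
      rw [ext_inv_Rm_add_hecke n A]
      noncomm_ring

lemma exchange_RY_D (h : D1Relations X D) :
    m1 n A (1 + D * X) * 𝐑 * 𝐃₂ = 𝐒⁻¹ * 𝐃₂ * 𝐑⁻¹ * m1 n A (1 + D * X) * 𝐑 := by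
  rw [m1_one_add_mul]
  calc (1 + 𝐃₁ * 𝐗₁) * 𝐑 * 𝐃₂
    _ = (𝐒⁻¹ + 𝐇) * 𝐃₂ + 𝐃₁ * 𝐗₁ * 𝐑 * 𝐃₂ := by
      rw [ext_inv_Rm21_add_hecke n A]
      noncomm_ring
    _ = 𝐒⁻¹ * 𝐃₂ + 𝐃₁ * 𝐒⁻¹ * (𝐒 * 𝐗₁ * 𝐑 * 𝐃₂ * 𝐑⁻¹ + 𝐇) * 𝐑 := by
      linear_combination (norm := noncomm_ring) hecke_mul_m2 D - 𝐃₁ * 𝐇 * ext_inv_mul_ext_Rm n A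
        + 𝐃₁ * hecke_mul_ext_inv_Rm n A * 𝐑
        - 𝐃₁ * ext_inv_mul_ext_Rm21 n A * 𝐗₁ * 𝐑 * 𝐃₂ * 𝐑⁻¹ * 𝐑
        - 𝐃₁ * 𝐗₁ * 𝐑 * 𝐃₂ * ext_inv_mul_ext_Rm n A
    _ = 𝐒⁻¹ * 𝐃₂ * 𝐑⁻¹ * (1 + 𝐃₁ * 𝐗₁) * 𝐑 := by
      linear_combination (norm := noncomm_ring) - 𝐒⁻¹ * 𝐃₂ * ext_inv_mul_ext_Rm n A
        - 𝐃₁ * 𝐒⁻¹ * h.dx_swap_mul_inv * 𝐑 - h.dd_swap * 𝐗₁ * 𝐑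

lemma reflection_LY (h : D1Relations X D) :
    𝐑⁻¹ * m1 n A (1 + X * D) * 𝐒⁻¹ * m2 n A (1 + X * D)
      = m2 n A (1 + X * D) * 𝐑⁻¹ * m1 n A (1 + X * D) * 𝐒⁻¹ := by
  have hX := h.exchange_LY_X
  have hD := h.exchange_LY_D
  rw [m2_one_add_mul]
  generalize m1 n A (1 + X * D) = L at hX hD ⊢
  linear_combination (norm := noncomm_ring) 𝐑⁻¹ * hX * 𝐃₂ + 𝐑⁻¹ * 𝐑 * 𝐗₂ * 𝐒 * hD
    + ext_inv_mul_ext_Rm n A * 𝐗₂ * 𝐒 * 𝐒⁻¹ * 𝐃₂ * 𝐑⁻¹ * L * 𝐒⁻¹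
    + 𝐗₂ * ext_Rm21_mul_ext_inv n A * 𝐃₂ * 𝐑⁻¹ * L * 𝐒⁻¹

lemma reflection_RY (h : D1Relations X D) :
    𝐒 * m1 n A (1 + D * X) * 𝐑 * m2 n A (1 + D * X)
      = m2 n A (1 + D * X) * 𝐒 * m1 n A (1 + D * X) * 𝐑 := by
  have hX := h.exchange_RY_X
  have hD := h.exchange_RY_D
  rw [m2_one_add_mul]
  generalize m1 n A (1 + D * X) = Y at hX hD ⊢
  linear_combination (norm := noncomm_ring) 𝐒 * hD * 𝐗₂ + 𝐒 * 𝐒⁻¹ * 𝐃₂ * 𝐑⁻¹ * hX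
    + ext_Rm21_mul_ext_inv n A * 𝐃₂ * 𝐑⁻¹ * 𝐑 * 𝐗₂ * 𝐒 * Y * 𝐑
    + 𝐃₂ * ext_inv_mul_ext_Rm n A * 𝐗₂ * 𝐒 * Y * 𝐑

end D1Relations

section Map

variable {B : Type} [Ring B] [Algebra K B] (f : A →ₐ[K] B)

lemma mapMatrix_ext (M : Matrix (Idx n) (Idx n) K) : f.mapMatrix (ext n A M) = ext n B M := by
  ext p r
  exact f.commutes (M p r)

lemma mapMatrix_m1 (M : Matrix (Fin n) (Fin n) A) :
    f.mapMatrix (m1 n A M) = m1 n B (f.mapMatrix M) := by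
  ext p r
  simp only [m1, AlgHom.mapMatrix_apply, map_apply, apply_ite f, map_zero]

lemma mapMatrix_m2 (M : Matrix (Fin n) (Fin n) A) :
    f.mapMatrix (m2 n A M) = m2 n B (f.mapMatrix M) := by
  ext p r
  simp only [m2, AlgHom.mapMatrix_apply, map_apply, apply_ite f, map_zero]

lemma mapMatrix_Om : f.mapMatrix (Om n A) = Om n B := by
  ext p r
  simp only [Om, AlgHom.mapMatrix_apply, map_apply, apply_ite f, map_one, map_zero]

end Map

end Rmatrix

namespace Statement12

open Rmatrix

variable (n : ℕ)

lemma mapMatrix_mkAlgHom_eq {M N : Matrix (Idx n) (Idx n) (FA n)}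
    (h : ∀ p r, Rel n (M p r) (N p r)) :
    (RingQuot.mkAlgHom K (Rel n)).mapMatrix M = (RingQuot.mkAlgHom K (Rel n)).mapMatrix N := by
  ext p r
  exact RingQuot.mkAlgHom_rel K (h p r)

lemma XM_eq_mapMatrix : XM n = (RingQuot.mkAlgHom K (Rel n)).mapMatrix (xF n) := rfl

lemma DM_eq_mapMatrix : DM n = (RingQuot.mkAlgHom K (Rel n)).mapMatrix (dF n) := rfl

lemma d1Relations_XM_DM : D1Relations (XM n) (DM n) where
  xx := by
    simpa only [map_mul, mapMatrix_ext, mapMatrix_m1, mapMatrix_m2, ← XM_eq_mapMatrix]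
      using mapMatrix_mkAlgHom_eq n (Rel.rXX (n := n))
  dd := by
    simpa only [map_mul, mapMatrix_ext, mapMatrix_m1, mapMatrix_m2, ← DM_eq_mapMatrix]
      using mapMatrix_mkAlgHom_eq n (Rel.rDD (n := n))
  dx := by
    simpa only [hecke, mul_smul_comm, map_mul, map_add, map_smul, mapMatrix_ext, mapMatrix_m1,
      mapMatrix_m2, mapMatrix_Om, ← XM_eq_mapMatrix, ← DM_eq_mapMatrix]
      using mapMatrix_mkAlgHom_eq n (Rel.rDX (n := n))

theorem statement_12 :
    (ext n (D1 n) (Rm n)⁻¹ * m1 n (D1 n) (LY n) * ext n (D1 n) (Rm21 n)⁻¹ * m2 n (D1 n) (LY n)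
      = m2 n (D1 n) (LY n) * ext n (D1 n) (Rm n)⁻¹ * m1 n (D1 n) (LY n) *
          ext n (D1 n) (Rm21 n)⁻¹) ∧
    (ext n (D1 n) (Rm21 n) * m1 n (D1 n) (RY n) * ext n (D1 n) (Rm n) * m2 n (D1 n) (RY n)
      = m2 n (D1 n) (RY n) * ext n (D1 n) (Rm21 n) * m1 n (D1 n) (RY n) *
          ext n (D1 n) (Rm n)) ∧
    (m1 n (D1 n) (LY n) * ext n (D1 n) (Rm21 n)⁻¹ * m2 n (D1 n) (XM n)
      = ext n (D1 n) (Rm n) * m2 n (D1 n) (XM n) * ext n (D1 n) (Rm21 n) *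
          m1 n (D1 n) (LY n) * ext n (D1 n) (Rm21 n)⁻¹) ∧
    (m1 n (D1 n) (LY n) * ext n (D1 n) (Rm21 n)⁻¹ * m2 n (D1 n) (DM n)
      = ext n (D1 n) (Rm21 n)⁻¹ * m2 n (D1 n) (DM n) * ext n (D1 n) (Rm n)⁻¹ *
          m1 n (D1 n) (LY n) * ext n (D1 n) (Rm21 n)⁻¹) ∧
    (m1 n (D1 n) (RY n) * ext n (D1 n) (Rm n) * m2 n (D1 n) (XM n)
      = ext n (D1 n) (Rm n) * m2 n (D1 n) (XM n) * ext n (D1 n) (Rm21 n) *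
          m1 n (D1 n) (RY n) * ext n (D1 n) (Rm n)) ∧
    (m1 n (D1 n) (RY n) * ext n (D1 n) (Rm n) * m2 n (D1 n) (DM n)
      = ext n (D1 n) (Rm21 n)⁻¹ * m2 n (D1 n) (DM n) * ext n (D1 n) (Rm n)⁻¹ *
          m1 n (D1 n) (RY n) * ext n (D1 n) (Rm n)) :=
  have h := d1Relations_XM_DM n
  ⟨h.reflection_LY, h.reflection_RY, h.exchange_LY_X, h.exchange_LY_D, h.exchange_RY_X,
    h.exchange_RY_D⟩

end Statement12
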